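/- For fixed r ∈ ℝ and λ ≥ 0, the minimum value of o ↦ (r - o)² + λ|o| over ℝ equals ρ(r), where ρ is the scaled Huber loss: ρ(u) = u² if |u| ≤ λ/2, and ρ(u) = λ|u| - λ²/4 if |u| > λ/2. -/

import Mathlib

/-!
For `|r| ≤ λ/2` the cross term is dominated, `2 r o ≤ 2 |r| |o| ≤ λ |o|`, so `o = 0` is
optimal. Otherwise complete the square in `|r - o|`: `(r - o)² ≥ λ |r - o| - λ²/4`, and the
triangle inequality `|r - o| + |o| ≥ |r|` gives the bound `λ |r| - λ²/4`, attained by soft thresholding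
`o = r ∓ λ/2`.
-/

lemma sq_le_sq_sub_add_mul_abs {r l : ℝ} (h : |r| ≤ l / 2) (o : ℝ) :
    r ^ 2 ≤ (r - o) ^ 2 + l * |o| := by
  have hcross : 2 * (r * o) ≤ l * |o| :=
    calc 2 * (r * o) ≤ 2 * (|r| * |o|) := by
          linarith [(le_abs_self (r * o)).trans_eq (abs_mul r o)]
      _ ≤ l * |o| := by nlinarith [abs_nonneg o]
  nlinarith [sq_nonneg o]

lemma mul_abs_sub_sq_div_four_le {l : ℝ} (hl : 0 ≤ l) (r o : ℝ) :
    l * |r| - l ^ 2 / 4 ≤ (r - o) ^ 2 + l * |o| := by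
  have htri : l * |r| ≤ l * |r - o| + l * |o| := by
    rw [← mul_add]
    exact mul_le_mul_of_nonneg_left (by linarith [abs_sub_abs_le_abs_sub r o]) hl
  nlinarith [sq_nonneg (|r - o| - l / 2), sq_abs (r - o)]

lemma exists_sq_sub_add_mul_abs_eq {r l : ℝ} (h : l / 2 ≤ |r|) :
    ∃ o, (r - o) ^ 2 + l * |o| = l * |r| - l ^ 2 / 4 := by
  rcases le_total 0 r with hr | hr
  · rw [abs_of_nonneg hr] at h ⊢
    exact ⟨r - l / 2, by rw [abs_of_nonneg (by linarith)]; ring⟩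
  · rw [abs_of_nonpos hr] at h ⊢
    exact ⟨r + l / 2, by rw [abs_of_nonpos (by linarith)]; ring⟩

/-- The minimum value of `o ↦ (r - o)² + λ|o|` equals the scaled Huber loss `ρ(r)`. -/
theorem stmt_1 (r l : ℝ) (hl : 0 ≤ l) :
    IsLeast (Set.range fun o : ℝ => (r - o) ^ 2 + l * |o|)
      (if |r| ≤ l / 2 then r ^ 2 else l * |r| - l ^ 2 / 4) := by
  split_ifs with h
  · exact ⟨⟨0, by simp⟩, by rintro _ ⟨o, rfl⟩; exact sq_le_sq_sub_add_mul_abs h o⟩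
  · obtain ⟨o, ho⟩ := exists_sq_sub_add_mul_abs_eq (not_le.1 h).le
    exact ⟨⟨o, ho⟩, by rintro _ ⟨o, rfl⟩; exact mul_abs_sub_sq_div_four_le hl r o⟩
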